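/- Let Q be a labelled quiver with labels X and let F ⊆ R⟨X⟩_Q. If G ⊆ R⟨X⟩_Q is a set of Q-consequences of F, then every Q-consequence of G is also a Q-consequence of F. -/

import Mathlib

open scoped BigOperators

/-- The free `R`-algebra `R⟨X⟩` on `X`, as the monoid algebra over `R`
of the free monoid `⟨X⟩` of words over `X`. -/
abbrev FreeAlg (R X : Type*) [CommRing R] := MonoidAlgebra R (FreeMonoid X)

/-- A labelled quiver `Q = (V, E, X, s, t, l)`: a directed multigraph with vertex set `V`,
edge set `E`, source and target maps `s, t : E → V` and labelling `l : E → X`. -/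
structure LabelledQuiver (V E X : Type*) where
  src : E → V
  tgt : E → V
  lab : E → X

/-- Paths in a labelled quiver `Q`; `LQPath Q u w` is the type of paths with source `u` and
target `w`.  `nil v` is the empty path at `v`; `cons e p` appends the edge `e` after `p`. -/
inductive LQPath {V E X : Type*} (Q : LabelledQuiver V E X) : V → V → Type _ where
  | nil (v : V) : LQPath Q v v
  | cons {u : V} (e : E) (p : LQPath Q u (Q.src e)) : LQPath Q u (Q.tgt e)

namespace LQPath
variable {V E X : Type*} {Q : LabelledQuiver V E X}
/-- The label `l(p) = l(eₙ)⋯l(e₁) ∈ ⟨X⟩` of a path; the empty path has label `1`. -/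
def label : {u w : V} → LQPath Q u w → FreeMonoid X
  | _, _, .nil _ => 1
  | _, _, .cons e p => FreeMonoid.of (Q.lab e) * p.label
end LQPath

namespace LabelledQuiver

variable {V E X : Type*} (Q : LabelledQuiver V E X)

/-- The set of signatures `σ(m) = {(s(p), t(p)) : p a path in Q with l(p) = m}`. -/
def sigmaM (m : FreeMonoid X) : Set (V × V) :=
  {vw | ∃ p : LQPath Q vw.1 vw.2, p.label = m}

variable {R : Type*} [CommRing R]

/-- The set of signatures `σ(f) = ⋂_{m ∈ supp(f)} σ(m)` of a polynomial. -/
def sigmaP (f : FreeAlg R X) : Set (V × V) :=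
  ⋂ m ∈ f.coeff.support, Q.sigmaM m

/-- `f` is compatible with `Q` if `σ(f) ≠ ∅`. -/
def Compatible (f : FreeAlg R X) : Prop :=
  (Q.sigmaP f).Nonempty

/-- `f` is uniformly compatible with `Q` if it is compatible and all monomials in its
support have the same set of signatures. -/
def UniformlyCompatible (f : FreeAlg R X) : Prop :=
  Q.Compatible f ∧
    ∀ m ∈ f.coeff.support, ∀ m' ∈ f.coeff.support,
      Q.sigmaM m = Q.sigmaM m'

/-- The set of sources `s(f)` of a polynomial: the projection of `σ(f)` to the first
component. -/
def srcSet (f : FreeAlg R X) : Set V := Prod.fst '' Q.sigmaP f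

/-- The set of targets `t(f)` of a polynomial: the projection of `σ(f)` to the second
component. -/
def tgtSet (f : FreeAlg R X) : Set V := Prod.snd '' Q.sigmaP f

end LabelledQuiver

/-- `f` is a `Q`-consequence of `F`: `f` is compatible with `Q` and there are finitely many
uniformly compatible `aᵢ, bᵢ` and `fᵢ ∈ F` with `f = Σᵢ aᵢ·fᵢ·bᵢ` where each summand
satisfies `σ(aᵢ·fᵢ·bᵢ) ⊇ σ(f)`. -/
def LabelledQuiver.QConsequence {V E X R : Type*} [CommRing R] (Q : LabelledQuiver V E X)
    (F : Set (FreeAlg R X)) (f : FreeAlg R X) : Prop :=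
  Q.Compatible f ∧
    ∃ (n : ℕ) (a b g : Fin n → FreeAlg R X),
      (∀ i, Q.UniformlyCompatible (a i)) ∧ (∀ i, Q.UniformlyCompatible (b i)) ∧
      (∀ i, g i ∈ F) ∧ f = ∑ i, a i * g i * b i ∧
      ∀ i, Q.sigmaP f ⊆ Q.sigmaP (a i * g i * b i)

/-!
Substituting `gᵢ = ∑ⱼ cᵢⱼ hᵢⱼ dᵢⱼ` into `f = ∑ᵢ aᵢ gᵢ bᵢ` gives `f = ∑ᵢⱼ (aᵢ cᵢⱼ) hᵢⱼ (dᵢⱼ bᵢ)`.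
Signatures of words compose as relations, so when all monomials of each factor share one
signature set, the signature set of a nonzero product is the composite of those of the factors.
After discarding zero summands this gives
`σ(f) ⊆ σ(aᵢ gᵢ bᵢ) ⊆ σ(bᵢ) ∘ σ(dᵢⱼ) ∘ σ(hᵢⱼ) ∘ σ(cᵢⱼ) ∘ σ(aᵢ)`, which lies inside the signature
set of the new summand; since `σ(f)` is nonempty, so are `σ(aᵢ cᵢⱼ)` and `σ(dᵢⱼ bᵢ)`.
-/

open SetRel

namespace LQPath

variable {V E X : Type*} {Q : LabelledQuiver V E X}

def comp : {u w z : V} → LQPath Q u w → LQPath Q w z → LQPath Q u z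
  | _, _, _, p, .nil _ => p
  | _, _, _, p, .cons e q => .cons e (p.comp q)

theorem label_comp : ∀ {u w z : V} (p : LQPath Q u w) (q : LQPath Q w z),
    (p.comp q).label = q.label * p.label
  | _, _, _, p, .nil _ => by simp [comp, label]
  | _, _, _, p, .cons e q => by simp [comp, label, label_comp p q, mul_assoc]

theorem exists_comp_of_label_eq_mul (m m' : FreeMonoid X) {u z : V} (p : LQPath Q u z)
    (hp : p.label = m * m') :
    ∃ (w : V) (p₁ : LQPath Q u w) (p₂ : LQPath Q w z), p₁.label = m' ∧ p₂.label = m := by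
  induction m using FreeMonoid.inductionOn' generalizing z with
  | one => exact ⟨z, p, .nil z, by simpa using hp, by simp [label]⟩
  | of_mul x m ih =>
    cases p with
    | nil => simpa [label] using congrArg FreeMonoid.toList hp
    | cons e q =>
      rw [label, mul_assoc] at hp
      obtain ⟨hx, hq⟩ := List.cons.inj (congrArg FreeMonoid.toList hp)
      obtain ⟨w, p₁, p₂, h₁, h₂⟩ := ih q (FreeMonoid.toList.injective hq)
      exact ⟨w, p₁, .cons e p₂, h₁, by simp [label, h₂, hx]⟩

end LQPath

namespace LabelledQuiver

variable {V E X : Type*} (Q : LabelledQuiver V E X)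

/-- Labels are read right to left, so a path with label `m * m'` first reads `m'`, then `m`. -/
theorem sigmaM_mul (m m' : FreeMonoid X) : Q.sigmaM (m * m') = Q.sigmaM m' ○ Q.sigmaM m := by
  ext ⟨u, z⟩
  constructor
  · rintro ⟨p, hp⟩
    obtain ⟨w, p₁, p₂, h₁, h₂⟩ := LQPath.exists_comp_of_label_eq_mul m m' p hp
    exact ⟨w, ⟨p₁, h₁⟩, ⟨p₂, h₂⟩⟩
  · rintro ⟨w, ⟨p₁, h₁⟩, p₂, h₂⟩
    exact ⟨p₁.comp p₂, by simp [LQPath.label_comp, h₁, h₂]⟩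

variable {R : Type*} [CommRing R]

/-- Unlike uniform compatibility, this condition is closed under multiplication. -/
def SigmaUniform (f : FreeAlg R X) : Prop :=
  ∀ m ∈ f.coeff.support, Q.sigmaM m = Q.sigmaP f

variable {Q}

theorem sigmaP_subset_sigmaM {f : FreeAlg R X} {m : FreeMonoid X} (hm : m ∈ f.coeff.support) :
    Q.sigmaP f ⊆ Q.sigmaM m :=
  Set.biInter_subset_of_mem hm

theorem uniformlyCompatible_iff {f : FreeAlg R X} :
    Q.UniformlyCompatible f ↔ Q.Compatible f ∧ Q.SigmaUniform f := by
  refine and_congr_right fun _ => ⟨fun h m hm => ?_, fun h m hm m' hm' => by rw [h m hm, h m' hm']⟩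
  exact (sigmaP_subset_sigmaM hm).antisymm' (Set.subset_iInter₂ fun m' hm' => (h m hm m' hm').le)

theorem UniformlyCompatible.sigmaUniform {f : FreeAlg R X} (hf : Q.UniformlyCompatible f) :
    Q.SigmaUniform f :=
  (uniformlyCompatible_iff.1 hf).2

theorem comp_subset_sigmaP_mul (f g : FreeAlg R X) :
    Q.sigmaP g ○ Q.sigmaP f ⊆ Q.sigmaP (f * g) := by
  classical
  refine Set.subset_iInter₂ fun m hm => ?_
  obtain ⟨m₁, hm₁, m₂, hm₂, rfl⟩ := Finset.mem_mul.1 (MonoidAlgebra.support_coeff_mul_subset f g hm)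
  rw [Q.sigmaM_mul]
  exact comp_subset_comp (sigmaP_subset_sigmaM hm₂) (sigmaP_subset_sigmaM hm₁)

namespace SigmaUniform

variable {f g : FreeAlg R X}

theorem sigmaM_eq_of_mem_support_mul (hf : Q.SigmaUniform f) (hg : Q.SigmaUniform g)
    {m : FreeMonoid X} (hm : m ∈ (f * g).coeff.support) :
    Q.sigmaM m = Q.sigmaP g ○ Q.sigmaP f := by
  classical
  obtain ⟨m₁, hm₁, m₂, hm₂, rfl⟩ := Finset.mem_mul.1 (MonoidAlgebra.support_coeff_mul_subset f g hm)
  rw [Q.sigmaM_mul, hf m₁ hm₁, hg m₂ hm₂]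

theorem sigmaP_mul_subset (hf : Q.SigmaUniform f) (hg : Q.SigmaUniform g) (hfg : f * g ≠ 0) :
    Q.sigmaP (f * g) ⊆ Q.sigmaP g ○ Q.sigmaP f := by
  obtain ⟨m, hm⟩ := Finsupp.support_nonempty_iff.2 (MonoidAlgebra.coeff_eq_zero.not.2 hfg)
  exact (sigmaP_subset_sigmaM hm).trans (hf.sigmaM_eq_of_mem_support_mul hg hm).le

theorem mul (hf : Q.SigmaUniform f) (hg : Q.SigmaUniform g) : Q.SigmaUniform (f * g) := by
  intro m hm
  have hfg : f * g ≠ 0 := fun h => by simp [h] at hm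
  rw [hf.sigmaM_eq_of_mem_support_mul hg hm]
  exact (comp_subset_sigmaP_mul f g).antisymm (hf.sigmaP_mul_subset hg hfg)

theorem sigmaP_mul_mul_subset {h : FreeAlg R X} (hf : Q.SigmaUniform f) (hg : Q.SigmaUniform g)
    (hh : Q.SigmaUniform h) (hfgh : f * g * h ≠ 0) :
    Q.sigmaP (f * g * h) ⊆ Q.sigmaP h ○ (Q.sigmaP g ○ Q.sigmaP f) :=
  ((hf.mul hg).sigmaP_mul_subset hh hfgh).trans <|
    comp_subset_comp_right (hf.sigmaP_mul_subset hg (left_ne_zero_of_mul hfgh))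

end SigmaUniform

theorem comp_subset_sigmaP_mul_mul (f g h : FreeAlg R X) :
    Q.sigmaP h ○ (Q.sigmaP g ○ Q.sigmaP f) ⊆ Q.sigmaP (f * g * h) :=
  (comp_subset_comp_right (comp_subset_sigmaP_mul f g)).trans (comp_subset_sigmaP_mul _ h)

/-- The inclusion behind substituting `g = ⋯ + c * h * d + ⋯` into the summand `a * g * b`. -/
theorem sigmaP_mul_mul_subset_of_subset {a g b c h d : FreeAlg R X} (ha : Q.SigmaUniform a)
    (hg : Q.SigmaUniform g) (hb : Q.SigmaUniform b) (hc : Q.SigmaUniform c)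
    (hh : Q.SigmaUniform h) (hd : Q.SigmaUniform d) (hagb : a * g * b ≠ 0)
    (hchd : c * h * d ≠ 0) (hσ : Q.sigmaP g ⊆ Q.sigmaP (c * h * d)) :
    Q.sigmaP (a * g * b) ⊆ Q.sigmaP (d * b) ○ (Q.sigmaP h ○ Q.sigmaP (a * c)) :=
  calc Q.sigmaP (a * g * b)
    _ ⊆ Q.sigmaP b ○ (Q.sigmaP g ○ Q.sigmaP a) := ha.sigmaP_mul_mul_subset hg hb hagb
    _ ⊆ Q.sigmaP b ○ ((Q.sigmaP d ○ (Q.sigmaP h ○ Q.sigmaP c)) ○ Q.sigmaP a) := by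
      gcongr
      exact hσ.trans (hc.sigmaP_mul_mul_subset hh hd hchd)
    _ = (Q.sigmaP b ○ Q.sigmaP d) ○ (Q.sigmaP h ○ (Q.sigmaP c ○ Q.sigmaP a)) := by
      simp only [comp_assoc]
    _ ⊆ Q.sigmaP (d * b) ○ (Q.sigmaP h ○ Q.sigmaP (a * c)) := by
      gcongr <;> exact comp_subset_sigmaP_mul _ _

variable (Q) in
/-- A witness that `f` is a `Q`-consequence of `F`, indexed by an arbitrary finite type. -/
structure IsQCombination (F : Set (FreeAlg R X)) (f : FreeAlg R X) {ι : Type*} [Fintype ι]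
    (a b g : ι → FreeAlg R X) : Prop where
  uniformlyCompatible_left : ∀ i, Q.UniformlyCompatible (a i)
  uniformlyCompatible_right : ∀ i, Q.UniformlyCompatible (b i)
  mem : ∀ i, g i ∈ F
  eq_sum : f = ∑ i, a i * g i * b i
  sigmaP_subset : ∀ i, Q.sigmaP f ⊆ Q.sigmaP (a i * g i * b i)

namespace IsQCombination

variable {F G : Set (FreeAlg R X)} {f : FreeAlg R X} {ι : Type*} [Fintype ι]
  {a b g : ι → FreeAlg R X}

theorem comp_equiv {κ : Type*} [Fintype κ] (hfF : Q.IsQCombination F f a b g) (e : κ ≃ ι) :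
    Q.IsQCombination F f (a ∘ e) (b ∘ e) (g ∘ e) where
  uniformlyCompatible_left k := hfF.uniformlyCompatible_left (e k)
  uniformlyCompatible_right k := hfF.uniformlyCompatible_right (e k)
  mem k := hfF.mem (e k)
  eq_sum := hfF.eq_sum.trans (e.sum_comp fun i => a i * g i * b i).symm
  sigmaP_subset k := hfF.sigmaP_subset (e k)

theorem qConsequence (hfF : Q.IsQCombination F f a b g) (hf : Q.Compatible f) :
    Q.QConsequence F f :=
  have ⟨ha, hb, hg, hsum, hσ⟩ := hfF.comp_equiv (Fintype.equivFin ι).symm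
  ⟨hf, _, _, _, _, ha, hb, hg, hsum, hσ⟩

theorem trans {κ : ι → Type*} [∀ i, Fintype (κ i)] {c d h : (i : ι) → κ i → FreeAlg R X}
    (hfG : Q.IsQCombination G f a b g) (hf : Q.Compatible f)
    (hagb : ∀ i, a i * g i * b i ≠ 0) (hg : ∀ i, Q.SigmaUniform (g i))
    (hgF : ∀ i, Q.IsQCombination F (g i) (c i) (d i) (h i))
    (hchd : ∀ i j, c i j * h i j * d i j ≠ 0) (hh : ∀ i j, Q.SigmaUniform (h i j)) :
    Q.IsQCombination F f (fun x : Sigma κ => a x.1 * c x.1 x.2)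
      (fun x => d x.1 x.2 * b x.1) (fun x => h x.1 x.2) := by
  have hσ (x : Sigma κ) : Q.sigmaP f ⊆
      Q.sigmaP (d x.1 x.2 * b x.1) ○ (Q.sigmaP (h x.1 x.2) ○ Q.sigmaP (a x.1 * c x.1 x.2)) :=
    (hfG.sigmaP_subset x.1).trans <| sigmaP_mul_mul_subset_of_subset
      (hfG.uniformlyCompatible_left x.1).sigmaUniform (hg x.1)
      (hfG.uniformlyCompatible_right x.1).sigmaUniform
      ((hgF x.1).uniformlyCompatible_left x.2).sigmaUniform (hh x.1 x.2)
      ((hgF x.1).uniformlyCompatible_right x.2).sigmaUniform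
      (hagb x.1) (hchd x.1 x.2) ((hgF x.1).sigmaP_subset x.2)
  obtain ⟨_, hp⟩ := hf
  refine ⟨fun x => ?_, fun x => ?_, fun x => (hgF x.1).mem x.2, ?_,
    fun x => (hσ x).trans (comp_subset_sigmaP_mul_mul _ _ _)⟩
  · obtain ⟨_, -, _, -, hac⟩ := hσ x hp
    exact uniformlyCompatible_iff.2 ⟨⟨_, hac⟩, (hfG.uniformlyCompatible_left x.1).sigmaUniform.mul
      ((hgF x.1).uniformlyCompatible_left x.2).sigmaUniform⟩
  · obtain ⟨_, hdb, -⟩ := hσ x hp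
    exact uniformlyCompatible_iff.2 ⟨⟨_, hdb⟩,
      ((hgF x.1).uniformlyCompatible_right x.2).sigmaUniform.mul
        (hfG.uniformlyCompatible_right x.1).sigmaUniform⟩
  · rw [hfG.eq_sum, Fintype.sum_sigma]
    refine Finset.sum_congr rfl fun i _ => ?_
    rw [(hgF i).eq_sum, Finset.mul_sum, Finset.sum_mul]
    simp only [mul_assoc]

end IsQCombination

theorem QConsequence.exists_isQCombination_ne_zero {F : Set (FreeAlg R X)} {f : FreeAlg R X}
    (hf : Q.QConsequence F f) : ∃ (n : ℕ) (a b g : Fin n → FreeAlg R X),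
      Q.IsQCombination F f a b g ∧ ∀ i, a i * g i * b i ≠ 0 := by
  classical
  obtain ⟨-, n, a, b, g, ha, hb, hg, hsum, hσ⟩ := hf
  let ι := {i : Fin n // a i * g i * b i ≠ 0}
  have hι : Q.IsQCombination F f (fun i : ι => a i) (fun i => b i) (fun i => g i) :=
    ⟨fun i => ha i, fun i => hb i, fun i => hg i, by
      rw [hsum, ← Finset.sum_subtype {i | a i * g i * b i ≠ 0} (by simp) fun i => a i * g i * b i,
        Finset.sum_filter_ne_zero], fun i => hσ i⟩
  exact ⟨_, _, _, _, hι.comp_equiv (Fintype.equivFin ι).symm,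
    fun k => ((Fintype.equivFin ι).symm k).2⟩

end LabelledQuiver

/-- If all elements of `F` and `G` are uniformly compatible with `Q` and every
element of `G` is a `Q`-consequence of `F`, then every `Q`-consequence of `G` is also a
`Q`-consequence of `F`. -/
theorem qConsequence_trans {R V E X : Type*} [CommRing R] (Q : LabelledQuiver V E X)
    (F G : Set (FreeAlg R X)) (hF : ∀ g ∈ F, Q.UniformlyCompatible g)
    (hG : ∀ g ∈ G, Q.UniformlyCompatible g)
    (hGF : ∀ g ∈ G, Q.QConsequence F g) (f : FreeAlg R X) (hf : Q.QConsequence G f) :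
    Q.QConsequence F f := by
  obtain ⟨n, a, b, g, hfG, hagb⟩ := hf.exists_isQCombination_ne_zero
  choose m c d h hgF hchd using fun i => (hGF (g i) (hfG.mem i)).exists_isQCombination_ne_zero
  exact (hfG.trans hf.1 hagb (fun i => (hG _ (hfG.mem i)).sigmaUniform) hgF hchd
    fun i j => (hF _ ((hgF i).mem j)).sigmaUniform).qConsequence hf.1
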